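/- Under the conditions of the prior-grid sandwich (σ² + ‖θ‖²/T ≤ σ_P² ≤ e^{1/T}(σ² + ‖θ‖²/T)), the Gaussian KL divergence satisfies KL(N(θ,σ²I_T) ‖ N(0,σ_P²I_T)) ≤ (1/2)[1 + T·log(1 + ‖θ‖²/(Tσ²))]. -/

import Mathlib

open Real

lemma mul_add_div_le_of_add_div_le {t s r P : ℝ} (ht : 0 < t) (hP : 0 < P)
    (h : s + r / t ≤ P) : (t * s + r) / P ≤ t := by
  rw [div_le_iff₀ hP]
  calc t * s + r = t * (s + r / t) := by field_simp
    _ ≤ t * P := mul_le_mul_of_nonneg_left h ht.le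

lemma log_div_le_add_log_div_of_le_exp_mul {x b c ε : ℝ} (hx : 0 < x) (hb : 0 < b)
    (h : x ≤ exp ε * c) : log (x / b) ≤ ε + log (c / b) := by
  have hc : 0 < c := pos_of_mul_pos_right (hx.trans_le h) (exp_pos ε).le
  calc log (x / b) ≤ log (exp ε * c / b) :=
        log_le_log (div_pos hx hb) (div_le_div_of_nonneg_right h hb.le)
    _ = ε + log (c / b) := by
        rw [mul_div_assoc, log_mul (exp_ne_zero ε) (div_pos hc hb).ne', log_exp]

/-- Plugging the sandwiched prior variance
`σ² + ‖θ‖²/T ≤ σ_P² ≤ e^{1/T}(σ² + ‖θ‖²/T)` into the Gaussian KL formula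
`KL = (1/2)[(Tσ² + ‖θ‖²)/σ_P² - T + T log(σ_P²/σ²)]` yields
`KL ≤ (1/2)[1 + T log(1 + ‖θ‖²/(Tσ²))]`. -/
theorem kl_sandwiched_prior_bound
    (T : ℕ) (hT : 0 < T) (θ : EuclideanSpace ℝ (Fin T)) (σ σP2 : ℝ)
    (hσ : 0 < σ)
    (h1 : σ ^ 2 + ‖θ‖ ^ 2 / T ≤ σP2)
    (h2 : σP2 ≤ Real.exp (1 / T) * (σ ^ 2 + ‖θ‖ ^ 2 / T)) :
    (1 / 2) * (((T : ℝ) * σ ^ 2 + ‖θ‖ ^ 2) / σP2 - T +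
        T * Real.log (σP2 / σ ^ 2)) ≤
      (1 / 2) * (1 + T * Real.log (1 + ‖θ‖ ^ 2 / (T * σ ^ 2))) := by
  have hT' : (0 : ℝ) < T := Nat.cast_pos.mpr hT
  have hP : 0 < σP2 := lt_of_lt_of_le (by positivity) h1
  have hfrac := mul_add_div_le_of_add_div_le hT' hP h1
  have hlog := log_div_le_add_log_div_of_le_exp_mul hP (pow_pos hσ 2) h2
  have hratio : (σ ^ 2 + ‖θ‖ ^ 2 / T) / σ ^ 2 = 1 + ‖θ‖ ^ 2 / (T * σ ^ 2) := by
    field_simp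
  rw [hratio] at hlog
  have hTlog := mul_le_mul_of_nonneg_left hlog hT'.le
  rw [mul_add, mul_one_div_cancel hT'.ne'] at hTlog
  linarith
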